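/- Let X ∈ ℝ^{n₁×n₂} be such that XXᵀ is invertible, and let W = (XXᵀ)^{-1/2} denote the inverse of the positive semidefinite square root of XXᵀ. Then ‖W^{1/2}X‖_F² = ‖X‖_*, where W^{1/2} is the positive semidefinite square root of W. -/

import Mathlib

/-!
With `M = W^{1/2} X` we have `Mᵀ M = Xᵀ W X`, and since `W (X Xᵀ) W = 1`,
`(Xᵀ W X)² = Xᵀ W (X Xᵀ) W X = Xᵀ X`. Being positive semidefinite, `Mᵀ M` is therefore the
square root of `Xᵀ X`, whose trace is the sum of the singular values of `X`; and
`‖M‖_F² = tr (Mᵀ M)`.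
-/

open Matrix
open scoped MatrixOrder ComplexOrder

/-- The singular values of `X` (unordered). -/
noncomputable def singularValues {n₁ n₂ : ℕ} (X : Matrix (Fin n₁) (Fin n₂) ℝ) : Fin n₂ → ℝ :=
  fun i => Real.sqrt ((show (Xᵀ * X).IsHermitian by simpa using Matrix.isHermitian_conjTranspose_mul_self X).eigenvalues i)

/-- The nuclear norm: sum of the singular values. -/
noncomputable def nuclearNorm {n₁ n₂ : ℕ} (X : Matrix (Fin n₁) (Fin n₂) ℝ) : ℝ :=
  ∑ i, singularValues X i

/-- The square of the Frobenius norm. -/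
noncomputable def frobSq {n₁ n₂ : ℕ} (X : Matrix (Fin n₁) (Fin n₂) ℝ) : ℝ :=
  ∑ i, ∑ j, (X i j) ^ 2

namespace Matrix

section Trace

variable {𝕜 n : Type*} [RCLike 𝕜] [Fintype n] [DecidableEq n]

theorem IsHermitian.trace_cfc {A : Matrix n n 𝕜} (hA : A.IsHermitian) (f : ℝ → ℝ) :
    (cfc f A).trace = ∑ i, (f (hA.eigenvalues i) : 𝕜) := by
  rw [hA.cfc_eq, IsHermitian.cfc, Unitary.conjStarAlgAut_apply, trace_mul_cycle,
    Unitary.coe_star_mul_self, one_mul, trace_diagonal]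
  rfl

theorem PosSemidef.trace_sqrt {A : Matrix n n 𝕜} (hA : A.PosSemidef) :
    (CFC.sqrt A).trace = ∑ i, (√(hA.1.eigenvalues i) : 𝕜) := by
  rw [CFC.sqrt_eq_real_sqrt A hA.nonneg, cfcₙ_eq_cfc, hA.1.trace_cfc]

end Trace

theorem mul_inv_mul_sq_of_mul_self_eq {m n α : Type*} [Fintype m] [DecidableEq m] [Fintype n] [DecidableEq n]
    [CommRing α] {X : Matrix m n α} {Y : Matrix n m α} {S : Matrix m m α}
    (hS : IsUnit S.det) (hSS : S * S = X * Y) : (Y * S⁻¹ * X) ^ 2 = Y * X :=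
  calc (Y * S⁻¹ * X) ^ 2 = Y * (S⁻¹ * (S * S) * S⁻¹) * X := by
        rw [sq, hSS]; simp only [Matrix.mul_assoc]
    _ = Y * X := by
        rw [← Matrix.mul_assoc S⁻¹, nonsing_inv_mul _ hS, Matrix.one_mul, mul_nonsing_inv _ hS,
          Matrix.mul_one]

theorem posSemidef_transpose_mul_self {m n : Type*} [Fintype m] [Finite n] (X : Matrix m n ℝ) :
    (Xᵀ * X).PosSemidef := by
  simpa using posSemidef_conjTranspose_mul_self X

end Matrix

theorem nuclearNorm_eq_trace_sqrt {n₁ n₂ : ℕ} (X : Matrix (Fin n₁) (Fin n₂) ℝ) :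
    nuclearNorm X = (CFC.sqrt (Xᵀ * X)).trace :=
  (posSemidef_transpose_mul_self X).trace_sqrt.symm

theorem frobSq_eq_trace_transpose_mul_self {n₁ n₂ : ℕ} (X : Matrix (Fin n₁) (Fin n₂) ℝ) :
    frobSq X = (Xᵀ * X).trace := by
  simp only [frobSq, trace, diag, mul_apply, transpose_apply, sq]
  exact Finset.sum_comm

theorem frobSq_weighted_eq_nuclearNorm_general (n₁ n₂ : ℕ) (X : Matrix (Fin n₁) (Fin n₂) ℝ)
    (hinv : IsUnit (X * Xᵀ))
    (S : Matrix (Fin n₁) (Fin n₁) ℝ) (hSS : S * S = X * Xᵀ)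
    (R : Matrix (Fin n₁) (Fin n₁) ℝ) (hR : R.PosSemidef) (hRR : R * R = S⁻¹) :
    frobSq (R * X) = nuclearNorm X := by
  have hS : IsUnit S.det := by
    rwa [← hSS, isUnit_iff_isUnit_det, det_mul, isUnit_mul_self_iff] at hinv
  have hRX : (R * X)ᵀ * (R * X) = Xᵀ * S⁻¹ * X := by
    rw [transpose_mul, ← conjTranspose_eq_transpose_of_trivial R, hR.1, ← hRR]
    simp only [Matrix.mul_assoc]
  have hsqrt : CFC.sqrt (Xᵀ * X) = Xᵀ * S⁻¹ * X := by
    rw [CFC.sqrt_eq_iff _ _ (posSemidef_transpose_mul_self X).nonneg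
      (hRX ▸ posSemidef_transpose_mul_self (R * X)).nonneg, ← sq,
      mul_inv_mul_sq_of_mul_self_eq hS hSS]
  rw [frobSq_eq_trace_transpose_mul_self, hRX, ← hsqrt, nuclearNorm_eq_trace_sqrt]

/-- If `X Xᵀ` is invertible, `S = (X Xᵀ)^{1/2}` is its psd square root,
`W = S⁻¹ = (X Xᵀ)^{-1/2}`, and `R = W^{1/2}` is the psd square root of `W`,
then `‖W^{1/2} X‖_F² = ‖X‖_*`. -/
theorem frobSq_weighted_eq_nuclearNorm (n₁ n₂ : ℕ) (X : Matrix (Fin n₁) (Fin n₂) ℝ)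
    (hinv : IsUnit (X * Xᵀ))
    (S : Matrix (Fin n₁) (Fin n₁) ℝ) (hS : S.PosSemidef) (hSS : S * S = X * Xᵀ)
    (R : Matrix (Fin n₁) (Fin n₁) ℝ) (hR : R.PosSemidef) (hRR : R * R = S⁻¹) :
    frobSq (R * X) = nuclearNorm X :=
  frobSq_weighted_eq_nuclearNorm_general n₁ n₂ X hinv S hSS R hR hRR
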